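/- Let A be an associative unital ℂ-algebra, q ∈ ℂ nonzero with q² ≠ 1, z ∈ ℂ nonzero, and u, v ∈ A invertible with u·v = q²·v·u. Define K = z·u⁻¹ (so K⁻¹ = z⁻¹·u), E = (q − q⁻¹)⁻¹·v⁻¹·(1 − u⁻¹), F = q(q − q⁻¹)⁻¹·v·(z·1 − z⁻¹·u). Then the Casimir element satisfies q·K + q⁻¹·K⁻¹ + (q − q⁻¹)²·F·E = (q·z + q⁻¹·z⁻¹)·1, i.e. the image of the Casimir under the free field homomorphism is the scalar q·z + q⁻¹·z⁻¹. -/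

import Mathlib

/-! Conjugation by `v` rescales `u` by `q⁻²`, so `v (z - z⁻¹ u) v⁻¹ = z - q⁻² z⁻¹ u`; after this
the Casimir lives in the commutative algebra generated by `u^{±1}`, where the terms in `u` and
`u⁻¹` cancel against `q K + q⁻¹ K⁻¹`, leaving the scalar `q z + q⁻¹ z⁻¹`. -/

theorem sub_inv_ne_zero_of_sq_ne_one {k : Type*} [Field k] {q : k} (hq : q ≠ 0)
    (hq2 : q ^ 2 ≠ 1) : q - q⁻¹ ≠ 0 := by
  rw [sub_ne_zero]
  contrapose! hq2
  field_simp at hq2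
  exact hq2

section QuantumTorus

variable {k A : Type*} [Field k] [Ring A] [Algebra k A] {c : k} {u v : Aˣ}

theorem Units.mul_mul_inv_eq_inv_smul_of_mul_eq_smul (hc : c ≠ 0)
    (huv : (u : A) * v = c • ((v : A) * u)) : (v : A) * u * ↑v⁻¹ = c⁻¹ • (u : A) := by
  have hvu : (v : A) * u = c⁻¹ • ((u : A) * v) := by
    rw [huv, smul_smul, inv_mul_cancel₀ hc, one_smul]
  rw [hvu, smul_mul_assoc, Units.mul_inv_cancel_right]

theorem Units.mul_affine_mul_inv_of_mul_eq_smul (hc : c ≠ 0)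
    (huv : (u : A) * v = c • ((v : A) * u)) (a b : k) :
    (v : A) * (a • 1 + b • (u : A)) * ↑v⁻¹ = a • 1 + (b * c⁻¹) • (u : A) := by
  rw [mul_add, add_mul, mul_smul_comm, mul_smul_comm, smul_mul_assoc, smul_mul_assoc,
    mul_one, Units.mul_inv, Units.mul_mul_inv_eq_inv_smul_of_mul_eq_smul hc huv, smul_smul]

end QuantumTorus

theorem casimir_free_field_realization
    (A : Type*) [Ring A] [Algebra ℂ A]
    (q z : ℂ) (hq : q ≠ 0) (hq2 : q ^ 2 ≠ 1)
    (u v : Aˣ) (huv : (u : A) * (v : A) = q ^ 2 • ((v : A) * (u : A))) :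
    let K : A := z • (↑u⁻¹ : A)
    let K' : A := z⁻¹ • (u : A)
    let E : A := (q - q⁻¹)⁻¹ • ((↑v⁻¹ : A) * (1 - (↑u⁻¹ : A)))
    let F : A := (q * (q - q⁻¹)⁻¹) • ((v : A) * (z • (1 : A) - z⁻¹ • (u : A)))
    q • K + q⁻¹ • K' + (q - q⁻¹) ^ 2 • (F * E) = (q * z + q⁻¹ * z⁻¹) • (1 : A) := by
  intro K K' E F
  have hd := sub_inv_ne_zero_of_sq_ne_one hq hq2
  have hconj : (v : A) * (z • (1 : A) - z⁻¹ • (u : A)) * ↑v⁻¹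
      = z • 1 + (-z⁻¹ * (q ^ 2)⁻¹) • (u : A) := by
    rw [sub_eq_add_neg, ← neg_smul,
      Units.mul_affine_mul_inv_of_mul_eq_smul (pow_ne_zero 2 hq) huv]
  have hFE : (q - q⁻¹) ^ 2 • (F * E)
      = q • ((z • 1 + (-z⁻¹ * (q ^ 2)⁻¹) • (u : A)) * (1 - (↑u⁻¹ : A))) := by
    simp only [F, E, smul_mul_smul, smul_smul, ← hconj, mul_assoc]
    congr 1
    field_simp
  rw [hFE]
  simp only [K, K', add_mul, mul_sub, smul_mul_assoc, one_mul, mul_one,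
    Units.mul_inv, smul_add, smul_sub, smul_smul]
  match_scalars <;> field_simp <;> ring
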